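/- arXiv:1210.6119 — 2 statements merged into one kernel-verified Lean document; each statement's English description precedes it below -/
import Mathlib

section
/- Let d ≥ 1. Let Π be the SNP system with delays consisting of neurons σ1, σ2 and synapse (1,2), where σ1 initially holds one spike and has the single rule a → a; d, and σ2 is a sink neuron. Let Π̄ be the SNP system without delays consisting of neurons σ1', σ2', σ3' and synapses (1',2'), (2',3'), where σ1' initially holds 1+d spikes and has the single rule a⁺/a → a (delay 0), σ2' is initially empty with the single rule a^{1+d} → a (delay 0), and σ3' is a sink neuron. Then the total runtime of Π is d and its sink σ2 ends with exactly 1 spike, while the total runtime of Π̄ is 1+d, its neuron σ2' receives a total of 1+d spikes, and its sink σ3' ends with exactly 1 spike; hence Π̄ simulates the sequential routing of Π with a time offset of exactly 1. -/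
/-!
Formalization of Spiking Neural P (SNP) systems with delays, following
Cabarle–Buño–Adorna, "Time After Time: Notes on Delays In Spiking Neural
P Systems".

A rule `E/a^c → a^b; d` is modelled by the set `lang ⊆ ℕ` of spike counts `k`
with `a^k ∈ L(E)`, together with `c`, `b` and the delay `d`.  Each neuron has
at most one rule (sink neurons, which never fire, have none).  A configuration
assigns to every neuron its spike count `n i` and its remaining closed time
`clk i`.  If a rule with delay `d` fires during the step leading to the
configuration at time `t`, the produced spikes become visible in the
configuration at time `t + d`; spikes sent to a closed neuron are lost.
The first rule application is counted as happening at time `0`, so the total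
runtime (time needed for a spike to arrive at the sink neurons from the source
neurons) is one less than the index of the first configuration in which all
sink neurons hold a spike.
-/

open scoped Classical

structure SNPRule where
  /-- the spike counts accepted by the regular expression `E` -/
  lang : Set ℕ
  c : ℕ
  b : ℕ
  d : ℕ
  c_pos : 1 ≤ c
  b_le_c : b ≤ c

/-- The rule `a^c → a^b; d` (whose regular expression is `E = a^c`). -/
def simpleRule (c b d : ℕ) (hc : 1 ≤ c) (hb : b ≤ c) : SNPRule :=
  ⟨{c}, c, b, d, hc, hb⟩

/-- The rule `a⁺/a → a` (no delay). -/
def plusRule : SNPRule :=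
  ⟨{k | 1 ≤ k}, 1, 1, 0, le_refl 1, le_refl 1⟩

/-- An SNP system of degree `m`: initial spike counts, (at most) one rule per
neuron, and an irreflexive synapse relation. -/
structure SNPSystem (m : ℕ) where
  init : Fin m → ℕ
  rule : Fin m → Option SNPRule
  syn : Fin m → Fin m → Prop
  syn_irrefl : ∀ i, ¬ syn i i

/-- A configuration: spike counts and remaining closed times. -/
structure SNPConfig (m : ℕ) where
  n : Fin m → ℕ
  clk : Fin m → ℕ

namespace SNPSystem

variable {m m' : ℕ}

/-- Neuron `i` is open and its rule is applicable in configuration `C`. -/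
def enabled (S : SNPSystem m) (C : SNPConfig m) (i : Fin m) : Prop :=
  C.clk i = 0 ∧ ∃ r, S.rule i = some r ∧ C.n i ∈ r.lang ∧ r.c ≤ C.n i

/-- Spikes emitted by neuron `i` during the current step: either its rule fires
with delay `0`, or its closed period (after firing a rule with delay `≥ 1`)
expires now. -/
noncomputable def emits (S : SNPSystem m) (C : SNPConfig m) (i : Fin m) : ℕ :=
  match S.rule i with
  | none => 0
  | some r =>
      if C.clk i = 0 ∧ C.n i ∈ r.lang ∧ r.c ≤ C.n i ∧ r.d = 0 then r.b
      else if C.clk i = 1 then r.b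
      else 0

/-- Spikes consumed by neuron `i` if its rule fires in the current step. -/
noncomputable def consumed (S : SNPSystem m) (C : SNPConfig m) (i : Fin m) : ℕ :=
  match S.rule i with
  | none => 0
  | some r => if C.clk i = 0 ∧ C.n i ∈ r.lang ∧ r.c ≤ C.n i then r.c else 0

/-- Remaining closed time of neuron `i` after the current step. -/
noncomputable def nextClk (S : SNPSystem m) (C : SNPConfig m) (i : Fin m) : ℕ :=
  match S.rule i with
  | none => C.clk i - 1
  | some r =>
      if C.clk i = 0 ∧ C.n i ∈ r.lang ∧ r.c ≤ C.n i then r.d else C.clk i - 1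

/-- Spikes sent towards neuron `j` during the current step. -/
noncomputable def sent (S : SNPSystem m) (C : SNPConfig m) (j : Fin m) : ℕ :=
  ∑ i, if S.syn i j then S.emits C i else 0

/-- Spikes actually received by neuron `j` during the current step (spikes sent
to a closed neuron are lost). -/
noncomputable def recv (S : SNPSystem m) (C : SNPConfig m) (j : Fin m) : ℕ :=
  if S.nextClk C j = 0 then S.sent C j else 0

/-- One (synchronized, global-clock) computation step. -/
noncomputable def step (S : SNPSystem m) (C : SNPConfig m) : SNPConfig m where
  n := fun i => C.n i - S.consumed C i + S.recv C i
  clk := fun i => S.nextClk C i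

/-- The initial configuration: all neurons open, spike counts given by `init`. -/
def initConfig (S : SNPSystem m) : SNPConfig m where
  n := S.init
  clk := fun _ => 0

/-- The configuration at time `t`. -/
noncomputable def conf (S : SNPSystem m) (t : ℕ) : SNPConfig m :=
  (S.step)^[t] S.initConfig

/-- A source neuron: no incoming synapses. -/
def isSource (S : SNPSystem m) (i : Fin m) : Prop :=
  ∀ j, ¬ S.syn j i

/-- A sink neuron: no outgoing synapses, and it never fires. -/
def isSink (S : SNPSystem m) (i : Fin m) : Prop :=
  (∀ j, ¬ S.syn i j) ∧ S.rule i = none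

/-- Total time needed for a spike to arrive at the sink neuron(s) from the
source neuron(s); the first rule application counts as happening at time `0`,
whence the `- 1`. -/
noncomputable def totalRuntime (S : SNPSystem m) : ℕ :=
  sInf {t | ∀ i, S.isSink i → 1 ≤ (S.conf t).n i} - 1

/-- The first time (counted as in `totalRuntime`) at which neuron `i` holds a
spike. -/
noncomputable def firstArrivalTime (S : SNPSystem m) (i : Fin m) : ℕ :=
  sInf {t | 1 ≤ (S.conf t).n i} - 1

/-- The first time (counted as in `totalRuntime`) at which neuron `i` spikes. -/
noncomputable def firstSpikeTime (S : SNPSystem m) (i : Fin m) : ℕ :=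
  sInf {t | 1 ≤ S.emits (S.conf t) i}

/-- An SNP system without delays: every rule has `d = 0`. -/
def delayFree (S : SNPSystem m) : Prop :=
  ∀ i r, S.rule i = some r → r.d = 0

/-- `T.Simulates S`: `T` has no delays; spikes arrive at the sink neurons of `T`
at the same time as at the sink neurons of `S` or offset by some constant
integer `k`; and the number of spikes arriving at the sink neurons of `T`
equals that for `S` or is a factor of one of the delays of `S`. -/
noncomputable def Simulates (T : SNPSystem m') (S : SNPSystem m) : Prop :=
  T.delayFree ∧
  (∃ k : ℤ, (T.totalRuntime : ℤ) = (S.totalRuntime : ℤ) + k) ∧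
  (∀ j, T.isSink j → ∀ i, S.isSink i →
    (T.conf (T.totalRuntime + 1)).n j = (S.conf (S.totalRuntime + 1)).n i ∨
    ∃ p r, S.rule p = some r ∧ (T.conf (T.totalRuntime + 1)).n j ∣ r.d)

/-- Sequential routing along a synapse `(i, j)`. -/
def sequentialAt (S : SNPSystem m) (i j : Fin m) : Prop :=
  S.syn i j

/-- Iterative routing: the two neurons form a loop. -/
def iterativeAt (S : SNPSystem m) (i j : Fin m) : Prop :=
  S.syn i j ∧ S.syn j i

/-- A split at neuron `i`: `i` sends its spike to at least two neurons. -/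
def splitAt (S : SNPSystem m) (i : Fin m) : Prop :=
  ∃ j k, j ≠ k ∧ S.syn i j ∧ S.syn i k

/-- A join at neuron `j`: at least two neurons send their spikes to `j`. -/
def joinAt (S : SNPSystem m) (j : Fin m) : Prop :=
  ∃ i k, i ≠ k ∧ S.syn i j ∧ S.syn k j

end SNPSystem

/-- The system `Π` of the statement: `σ1` (one spike, rule `a → a; d`)
with a synapse to the sink `σ2`. -/
def seqPi (d : ℕ) : SNPSystem 2 where
  init := ![1, 0]
  rule := ![some (simpleRule 1 1 d (le_refl 1) (le_refl 1)), none]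
  syn := fun i j => i.val = 0 ∧ j.val = 1
  syn_irrefl := by intro i h; omega

/-- The delay-free system `Π̄` of the statement:
`σ1'` (`1 + d` spikes, rule `a⁺/a → a`) → `σ2'` (rule `a^{1+d} → a`) → sink `σ3'`. -/
def seqPiBar (d : ℕ) : SNPSystem 3 where
  init := ![1 + d, 0, 0]
  rule := ![some plusRule, some (simpleRule (1 + d) 1 0 (by omega) (by omega)), none]
  syn := fun i j => (i.val = 0 ∧ j.val = 1) ∨ (i.val = 1 ∧ j.val = 2)
  syn_irrefl := by intro i h; omega


lemma conf_succ {m : ℕ} (S : SNPSystem m) (t : ℕ) :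
    S.conf (t + 1) = S.step (S.conf t) := by
  simp [SNPSystem.conf, Function.iterate_succ_apply']

lemma seqPi_rule0 (d : ℕ) :
    (seqPi d).rule 0 = some (simpleRule 1 1 d (le_refl 1) (le_refl 1)) := rfl
lemma seqPi_rule1 (d : ℕ) : (seqPi d).rule 1 = none := rfl

lemma pi_conf (d : ℕ) (hd : 1 ≤ d) (t : ℕ) :
    ((seqPi d).conf t).n 0 = (if t = 0 then 1 else 0) ∧
    ((seqPi d).conf t).n 1 = (if t ≤ d then 0 else 1) ∧
    ((seqPi d).conf t).clk 0 = (if t = 0 then 0 else d + 1 - t) ∧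
    ((seqPi d).conf t).clk 1 = 0 := by
  induction t with
  | zero =>
      simp [SNPSystem.conf, SNPSystem.initConfig, seqPi]
  | succ t ih =>
      obtain ⟨h0, h1, h2, h3⟩ := ih
      rw [conf_succ]
      set C := (seqPi d).conf t with hC
      have hemit0 : (seqPi d).emits C 0 = if t = d then 1 else 0 := by
        simp only [SNPSystem.emits, seqPi_rule0, simpleRule, Set.mem_singleton_iff, h0, h2]
        by_cases ht0 : t = 0 <;> by_cases htd : t = d <;>
          simp [ht0, htd] <;> (try split_ifs) <;> omega
      have hcons0 : (seqPi d).consumed C 0 = if t = 0 then 1 else 0 := by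
        simp only [SNPSystem.consumed, seqPi_rule0, simpleRule, Set.mem_singleton_iff, h0, h2]
        by_cases ht0 : t = 0 <;> by_cases htd : t = d <;>
          simp [ht0, htd] <;> (try split_ifs) <;> omega
      have hclk0 : (seqPi d).nextClk C 0 = if t + 1 = 0 then 0 else d + 1 - (t + 1) := by
        simp only [SNPSystem.nextClk, seqPi_rule0, simpleRule, Set.mem_singleton_iff, h0, h2]
        by_cases ht0 : t = 0 <;> by_cases htd : t = d <;>
          simp [ht0, htd] <;> (try split_ifs) <;> omega
      have hclk1 : (seqPi d).nextClk C 1 = 0 := by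
        simp only [SNPSystem.nextClk, seqPi_rule1, h3]
      have hcons1 : (seqPi d).consumed C 1 = 0 := by
        simp only [SNPSystem.consumed, seqPi_rule1]
      have hemit1 : (seqPi d).emits C 1 = 0 := by
        simp only [SNPSystem.emits, seqPi_rule1]
      have hsyn01 : (seqPi d).syn 0 1 := by constructor <;> rfl
      have hsyn11 : ¬ (seqPi d).syn 1 1 := (seqPi d).syn_irrefl 1
      have hsyn00 : ¬ (seqPi d).syn 0 0 := (seqPi d).syn_irrefl 0
      have hsyn10 : ¬ (seqPi d).syn 1 0 := by intro h; exact absurd h.2 (by norm_num)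
      have hsent1 : (seqPi d).sent C 1 = if t = d then 1 else 0 := by
        rw [SNPSystem.sent, Fin.sum_univ_two, if_pos hsyn01, if_neg hsyn11, hemit0]
        omega
      have hsent0 : (seqPi d).sent C 0 = 0 := by
        rw [SNPSystem.sent, Fin.sum_univ_two, if_neg hsyn00, if_neg hsyn10]
      have hrecv0 : (seqPi d).recv C 0 = 0 := by
        rw [SNPSystem.recv, hsent0]; split_ifs <;> rfl
      have hrecv1 : (seqPi d).recv C 1 = if t = d then 1 else 0 := by
        rw [SNPSystem.recv, if_pos hclk1, hsent1]
      refine ⟨?_, ?_, ?_, ?_⟩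
      · show C.n 0 - (seqPi d).consumed C 0 + (seqPi d).recv C 0 = _
        rw [hcons0, hrecv0, h0]
        by_cases ht0 : t = 0 <;> simp [ht0]
      · show C.n 1 - (seqPi d).consumed C 1 + (seqPi d).recv C 1 = _
        rw [hcons1, hrecv1, h1]
        by_cases htd : t = d <;> by_cases htle : t ≤ d <;>
          simp [htd, htle] <;> (try split_ifs) <;> omega
      · exact hclk0
      · exact hclk1

lemma seqPiBar_rule0 (d : ℕ) : (seqPiBar d).rule 0 = some plusRule := rfl
lemma seqPiBar_rule1 (d : ℕ) :
    (seqPiBar d).rule 1 = some (simpleRule (1 + d) 1 0 (by omega) (by omega)) := rfl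
lemma seqPiBar_rule2 (d : ℕ) : (seqPiBar d).rule 2 = none := rfl

lemma bar_conf (d : ℕ) (t : ℕ) :
    ((seqPiBar d).conf t).n 0 = 1 + d - t ∧
    ((seqPiBar d).conf t).n 1 = (if t ≤ 1 + d then t else 0) ∧
    ((seqPiBar d).conf t).n 2 = (if t ≤ 1 + d then 0 else 1) ∧
    (∀ i, ((seqPiBar d).conf t).clk i = 0) := by
  induction t with
  | zero =>
      refine ⟨rfl, ?_, ?_, fun i => rfl⟩ <;> simp [SNPSystem.conf, SNPSystem.initConfig, seqPiBar]
  | succ t ih =>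
      obtain ⟨h0, h1, h2, h3⟩ := ih
      rw [conf_succ]
      set C := (seqPiBar d).conf t with hC
      have hemit0 : (seqPiBar d).emits C 0 = if t ≤ d then 1 else 0 := by
        simp only [SNPSystem.emits, seqPiBar_rule0, plusRule, Set.mem_setOf_eq, h0, h3 0]
        by_cases htd : t ≤ d <;> simp [htd] <;> omega
      have hcons0 : (seqPiBar d).consumed C 0 = if t ≤ d then 1 else 0 := by
        simp only [SNPSystem.consumed, seqPiBar_rule0, plusRule, Set.mem_setOf_eq, h0, h3 0]
        by_cases htd : t ≤ d <;> simp [htd] <;> omega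
      have hemit1 : (seqPiBar d).emits C 1 = if t = 1 + d then 1 else 0 := by
        simp only [SNPSystem.emits, seqPiBar_rule1, simpleRule, Set.mem_singleton_iff, h1, h3 1]
        by_cases ht : t = 1 + d <;> by_cases htle : t ≤ 1 + d <;>
          simp [ht, htle] <;> (try split_ifs) <;> omega
      have hcons1 : (seqPiBar d).consumed C 1 = if t = 1 + d then 1 + d else 0 := by
        simp only [SNPSystem.consumed, seqPiBar_rule1, simpleRule, Set.mem_singleton_iff, h1, h3 1]
        by_cases ht : t = 1 + d <;> by_cases htle : t ≤ 1 + d <;>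
          simp [ht, htle] <;> (try split_ifs) <;> omega
      have hemit2 : (seqPiBar d).emits C 2 = 0 := by
        simp only [SNPSystem.emits, seqPiBar_rule2]
      have hcons2 : (seqPiBar d).consumed C 2 = 0 := by
        simp only [SNPSystem.consumed, seqPiBar_rule2]
      have hclkA : (seqPiBar d).nextClk C 0 = 0 := by
        simp only [SNPSystem.nextClk, seqPiBar_rule0, plusRule, h3]
        split_ifs <;> rfl
      have hclkB : (seqPiBar d).nextClk C 1 = 0 := by
        simp only [SNPSystem.nextClk, seqPiBar_rule1, simpleRule, h3]
        split_ifs <;> rfl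
      have hclkC : (seqPiBar d).nextClk C 2 = 0 := by
        simp only [SNPSystem.nextClk, seqPiBar_rule2, h3]
      have hclk : ∀ i, (seqPiBar d).nextClk C i = 0 := by
        intro i
        fin_cases i
        · exact hclkA
        · exact hclkB
        · exact hclkC
      have hsyn01 : (seqPiBar d).syn 0 1 := Or.inl ⟨rfl, rfl⟩
      have hsyn12 : (seqPiBar d).syn 1 2 := Or.inr ⟨rfl, rfl⟩
      have hsynF : ∀ i j : Fin 3, ¬ ((i.val = 0 ∧ j.val = 1) ∨ (i.val = 1 ∧ j.val = 2)) →
          ¬ (seqPiBar d).syn i j := fun i j h => h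
      have hsent0 : (seqPiBar d).sent C 0 = 0 := by
        rw [SNPSystem.sent, Fin.sum_univ_three,
          if_neg (hsynF 0 0 (by norm_num)), if_neg (hsynF 1 0 (by norm_num)),
          if_neg (hsynF 2 0 (by norm_num))]
      have hsent1 : (seqPiBar d).sent C 1 = if t ≤ d then 1 else 0 := by
        rw [SNPSystem.sent, Fin.sum_univ_three, if_pos hsyn01,
          if_neg (hsynF 1 1 (by norm_num)), if_neg (hsynF 2 1 (by norm_num)), hemit0]
        omega
      have hsent2 : (seqPiBar d).sent C 2 = if t = 1 + d then 1 else 0 := by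
        rw [SNPSystem.sent, Fin.sum_univ_three, if_pos hsyn12,
          if_neg (hsynF 0 2 (by norm_num)), if_neg (hsynF 2 2 (by norm_num)), hemit1]
        omega
      have hrecv0 : (seqPiBar d).recv C 0 = 0 := by
        rw [SNPSystem.recv, if_pos (hclk 0), hsent0]
      have hrecv1 : (seqPiBar d).recv C 1 = if t ≤ d then 1 else 0 := by
        rw [SNPSystem.recv, if_pos (hclk 1), hsent1]
      have hrecv2 : (seqPiBar d).recv C 2 = if t = 1 + d then 1 else 0 := by
        rw [SNPSystem.recv, if_pos (hclk 2), hsent2]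
      refine ⟨?_, ?_, ?_, fun i => hclk i⟩
      · show C.n 0 - (seqPiBar d).consumed C 0 + (seqPiBar d).recv C 0 = _
        rw [hcons0, hrecv0, h0]
        split_ifs <;> omega
      · show C.n 1 - (seqPiBar d).consumed C 1 + (seqPiBar d).recv C 1 = _
        rw [hcons1, hrecv1, h1]
        split_ifs <;> omega
      · show C.n 2 - (seqPiBar d).consumed C 2 + (seqPiBar d).recv C 2 = _
        rw [hcons2, hrecv2, h2]
        split_ifs <;> omega

lemma pi_sink (d : ℕ) (i : Fin 2) : (seqPi d).isSink i ↔ i = 1 := by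
  constructor
  · rintro ⟨-, hr⟩
    fin_cases i
    · exact absurd hr (by simp [seqPi])
    · rfl
  · rintro rfl
    exact ⟨fun j h => by exact absurd h.1 (by norm_num), rfl⟩

lemma bar_sink (d : ℕ) (i : Fin 3) : (seqPiBar d).isSink i ↔ i = 2 := by
  constructor
  · rintro ⟨-, hr⟩
    fin_cases i
    · exact absurd hr (by simp [seqPiBar])
    · exact absurd hr (by simp [seqPiBar])
    · rfl
  · rintro rfl
    refine ⟨fun j h => ?_, rfl⟩
    rcases h with ⟨h1, -⟩ | ⟨h1, -⟩ <;> norm_num at h1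

lemma pi_runtime (d : ℕ) (hd : 1 ≤ d) : (seqPi d).totalRuntime = d := by
  have hset : {t | ∀ i, (seqPi d).isSink i → 1 ≤ ((seqPi d).conf t).n i} = Set.Ici (d + 1) := by
    ext t
    simp only [Set.mem_setOf_eq, Set.mem_Ici]
    constructor
    · intro h
      have := h 1 ((pi_sink d 1).2 rfl)
      rw [(pi_conf d hd t).2.1] at this
      by_contra hc
      rw [if_pos (by omega)] at this
      omega
    · intro h i hi
      rw [(pi_sink d i).1 hi, (pi_conf d hd t).2.1, if_neg (by omega)]
    
  rw [SNPSystem.totalRuntime, hset, csInf_Ici]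
  omega

lemma bar_runtime (d : ℕ) : (seqPiBar d).totalRuntime = 1 + d := by
  have hset : {t | ∀ i, (seqPiBar d).isSink i → 1 ≤ ((seqPiBar d).conf t).n i} = Set.Ici (d + 2) := by
    ext t
    simp only [Set.mem_setOf_eq, Set.mem_Ici]
    constructor
    · intro h
      have := h 2 ((bar_sink d 2).2 rfl)
      rw [(bar_conf d t).2.2.1] at this
      by_contra hc
      rw [if_pos (by omega)] at this
      omega
    · intro h i hi
      rw [(bar_sink d i).1 hi, (bar_conf d t).2.2.1, if_neg (by omega)]
  rw [SNPSystem.totalRuntime, hset, csInf_Ici]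
  omega

lemma bar_recv1 (d t : ℕ) :
    (seqPiBar d).recv ((seqPiBar d).conf t) 1 = if t ≤ d then 1 else 0 := by
  obtain ⟨h0, h1, h2, h3⟩ := bar_conf d t
  set C := (seqPiBar d).conf t with hC
  have hemit0 : (seqPiBar d).emits C 0 = if t ≤ d then 1 else 0 := by
    simp only [SNPSystem.emits, seqPiBar_rule0, plusRule, Set.mem_setOf_eq, h0, h3 0]
    by_cases htd : t ≤ d <;> simp [htd] <;> omega
  have hclkB : (seqPiBar d).nextClk C 1 = 0 := by
    simp only [SNPSystem.nextClk, seqPiBar_rule1, simpleRule, h3]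
    split_ifs <;> rfl
  have hsyn01 : (seqPiBar d).syn 0 1 := Or.inl ⟨rfl, rfl⟩
  have hsynF : ∀ i j : Fin 3, ¬ ((i.val = 0 ∧ j.val = 1) ∨ (i.val = 1 ∧ j.val = 2)) →
      ¬ (seqPiBar d).syn i j := fun i j h => h
  rw [SNPSystem.recv, if_pos hclkB, SNPSystem.sent, Fin.sum_univ_three, if_pos hsyn01,
    if_neg (hsynF 1 1 (by norm_num)), if_neg (hsynF 2 1 (by norm_num)), hemit0]
  omega

theorem sequential_single_delay_simulation' (d : ℕ) (hd : 1 ≤ d) :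
    (seqPi d).totalRuntime = d ∧
    (∀ t, (seqPi d).totalRuntime + 1 ≤ t → ((seqPi d).conf t).n 1 = 1) ∧
    (seqPiBar d).totalRuntime = 1 + d ∧
    (∃ T, (∀ t, T ≤ t → (seqPiBar d).recv ((seqPiBar d).conf t) 1 = 0) ∧
      ∑ t ∈ Finset.range T, (seqPiBar d).recv ((seqPiBar d).conf t) 1 = 1 + d) ∧
    (∀ t, (seqPiBar d).totalRuntime + 1 ≤ t → ((seqPiBar d).conf t).n 2 = 1) ∧
    (seqPiBar d).Simulates (seqPi d) ∧
    (seqPiBar d).totalRuntime = (seqPi d).totalRuntime + 1 := by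
  refine ⟨pi_runtime d hd, ?_, bar_runtime d, ?_, ?_, ⟨?_, ⟨1, ?_⟩, ?_⟩, ?_⟩
  · intro t ht
    rw [pi_runtime d hd] at ht
    rw [(pi_conf d hd t).2.1, if_neg (by omega)]
  · refine ⟨1 + d, fun t ht => ?_, ?_⟩
    · rw [bar_recv1, if_neg (by omega)]
    · rw [Finset.sum_congr rfl (fun x hx => by
        rw [bar_recv1, if_pos (by simp only [Finset.mem_range] at hx; omega)])]
      simp
  · intro t ht
    rw [bar_runtime d] at ht
    rw [(bar_conf d t).2.2.1, if_neg (by omega)]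
  · intro i r hr
    fin_cases i
    · have h := (seqPiBar_rule0 d).symm.trans hr
      injection h with h
      rw [← h]; rfl
    · have h := (seqPiBar_rule1 d).symm.trans hr
      injection h with h
      rw [← h]; rfl
    · exact absurd ((seqPiBar_rule2 d).symm.trans hr) (by simp)
  · rw [bar_runtime d, pi_runtime d hd]
    push_cast
    ring
  · intro j hj i hi
    left
    rw [(bar_sink d j).1 hj, (pi_sink d i).1 hi, bar_runtime d, pi_runtime d hd,
      (bar_conf d (1 + d + 1)).2.2.1, (pi_conf d hd (d + 1)).2.1,
      if_neg (by omega), if_neg (by omega)]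
  · rw [bar_runtime d, pi_runtime d hd]
    omega

theorem sequential_single_delay_simulation (d : ℕ) (hd : 1 ≤ d) :
    -- the total runtime of Π is d
    (seqPi d).totalRuntime = d ∧
    -- its sink σ2 ends with exactly 1 spike
    (∀ t, (seqPi d).totalRuntime + 1 ≤ t → ((seqPi d).conf t).n 1 = 1) ∧
    -- the total runtime of Π̄ is 1 + d
    (seqPiBar d).totalRuntime = 1 + d ∧
    -- its neuron σ2' receives a total of 1 + d spikes
    (∃ T, (∀ t, T ≤ t → (seqPiBar d).recv ((seqPiBar d).conf t) 1 = 0) ∧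
      ∑ t ∈ Finset.range T, (seqPiBar d).recv ((seqPiBar d).conf t) 1 = 1 + d) ∧
    -- its sink σ3' ends with exactly 1 spike
    (∀ t, (seqPiBar d).totalRuntime + 1 ≤ t → ((seqPiBar d).conf t).n 2 = 1) ∧
    -- hence Π̄ simulates the sequential routing of Π with a time offset of exactly 1
    (seqPiBar d).Simulates (seqPi d) ∧
    (seqPiBar d).totalRuntime = (seqPi d).totalRuntime + 1 :=
  sequential_single_delay_simulation' d hd
end

section
/- Let d ≥ 1. Let Π be the SNP system with delays consisting of neurons σ1, σ2, σ3, σ4 and synapses (1,2), (2,3), (2,4), where σ1 initially holds one spike and has the single rule a → a (delay 0), σ2 (the neuron performing the split) has the single rule a → a; d, and σ3, σ4 are sink neurons. Then the total runtime of Π is 1 + d, both sinks σ3 and σ4 ending with exactly 1 spike each, and there exists an SNP system without delays Π̄ with one source neuron and two sink neurons whose total runtime is also 1 + d and whose two sinks end with exactly 1 spike each; hence Π̄ simulates the split routing of Π with zero time offset. -/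
/-!
Formalization of Spiking Neural P (SNP) systems with delays, following
Cabarle–Buño–Adorna, "Time After Time: Notes on Delays In Spiking Neural
P Systems".

A rule `E/a^c → a^b; d` is modelled by the set `lang ⊆ ℕ` of spike counts `k`
with `a^k ∈ L(E)`, together with `c`, `b` and the delay `d`.  Each neuron has
at most one rule (sink neurons, which never fire, have none).  A configuration
assigns to every neuron its spike count `n i` and its remaining closed time
`clk i`.  If a rule with delay `d` fires during the step leading to the
configuration at time `t`, the produced spikes become visible in the
configuration at time `t + d`; spikes sent to a closed neuron are lost.
The first rule application is counted as happening at time `0`, so the total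
runtime (time needed for a spike to arrive at the sink neurons from the source
neurons) is one less than the index of the first configuration in which all
sink neurons hold a spike.
-/

open scoped Classical

/-- The split system `Π` of the statement: `σ1` (one spike, rule `a → a`) →
`σ2` (the splitting neuron, rule `a → a; d`) → sinks `σ3`, `σ4`. -/
def splitParentPi (d : ℕ) : SNPSystem 4 where
  init := ![1, 0, 0, 0]
  rule := ![some (simpleRule 1 1 0 (le_refl 1) (le_refl 1)),
            some (simpleRule 1 1 d (le_refl 1) (le_refl 1)), none, none]
  syn := fun i j =>
    (i.val = 0 ∧ j.val = 1) ∨ (i.val = 1 ∧ j.val = 2) ∨ (i.val = 1 ∧ j.val = 3)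
  syn_irrefl := by intro i h; omega

namespace SNPProof
open SNPSystem

/-! ### Explicit configurations for the parent system `Π` -/

def c0 : SNPConfig 4 := ⟨![1,0,0,0], ![0,0,0,0]⟩
def c1 : SNPConfig 4 := ⟨![0,1,0,0], ![0,0,0,0]⟩
def cmid (k : ℕ) : SNPConfig 4 := ⟨![0,0,0,0], ![0,k,0,0]⟩
def cfin : SNPConfig 4 := ⟨![0,0,1,1], ![0,0,0,0]⟩

lemma pi_init (d : ℕ) : (splitParentPi d).initConfig = c0 := by
  unfold SNPSystem.initConfig
  congr 1 <;> funext i <;> fin_cases i <;> simp [splitParentPi, c0]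

lemma step_c0 (d : ℕ) : (splitParentPi d).step c0 = c1 := by
  unfold SNPSystem.step
  congr 1 <;> funext i <;> fin_cases i <;>
    simp [SNPSystem.consumed, SNPSystem.recv, SNPSystem.nextClk, SNPSystem.sent,
      SNPSystem.emits, splitParentPi, c0, c1, simpleRule, Fin.sum_univ_four] <;> decide

lemma step_c1 (d : ℕ) (hd : 1 ≤ d) : (splitParentPi d).step c1 = cmid d := by
  have hd' : ¬ d = 0 := by omega
  unfold SNPSystem.step
  congr 1 <;> funext i <;> fin_cases i <;>
    simp [SNPSystem.consumed, SNPSystem.recv, SNPSystem.nextClk, SNPSystem.sent,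
      SNPSystem.emits, splitParentPi, c1, cmid, simpleRule, Fin.sum_univ_four, hd']

lemma step_cmid (d k : ℕ) (hk : 2 ≤ k) :
    (splitParentPi d).step (cmid k) = cmid (k-1) := by
  have h0 : ¬ k = 0 := by omega
  have h1 : ¬ k = 1 := by omega
  unfold SNPSystem.step
  congr 1 <;> funext i <;> fin_cases i <;>
    simp [SNPSystem.consumed, SNPSystem.recv, SNPSystem.nextClk, SNPSystem.sent,
      SNPSystem.emits, splitParentPi, cmid, simpleRule, Fin.sum_univ_four, h0, h1]

lemma step_cmid1 (d : ℕ) : (splitParentPi d).step (cmid 1) = cfin := by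
  unfold SNPSystem.step
  congr 1 <;> funext i <;> fin_cases i <;>
    simp [SNPSystem.consumed, SNPSystem.recv, SNPSystem.nextClk, SNPSystem.sent,
      SNPSystem.emits, splitParentPi, cmid, cfin, simpleRule, Fin.sum_univ_four] <;> decide

lemma step_cfin (d : ℕ) : (splitParentPi d).step cfin = cfin := by
  unfold SNPSystem.step
  congr 1 <;> funext i <;> fin_cases i <;>
    simp [SNPSystem.consumed, SNPSystem.recv, SNPSystem.nextClk, SNPSystem.sent,
      SNPSystem.emits, splitParentPi, cfin, simpleRule, Fin.sum_univ_four]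


/-! ### The trajectory of `Π` -/

def piState (d t : ℕ) : SNPConfig 4 :=
  if t = 0 then c0 else if t = 1 then c1
  else if t ≤ d + 1 then cmid (d + 2 - t) else cfin

lemma pi_conf (d : ℕ) (hd : 1 ≤ d) (t : ℕ) :
    (splitParentPi d).conf t = piState d t := by
  induction t with
  | zero => simp [SNPSystem.conf, piState, pi_init]
  | succ t ih =>
      have hstep : (splitParentPi d).conf (t+1)
          = (splitParentPi d).step ((splitParentPi d).conf t) := by
        simp [SNPSystem.conf, Function.iterate_succ_apply']
      rw [hstep, ih]
      rcases Nat.eq_zero_or_pos t with h0 | hpos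
      · subst h0
        simp [piState, step_c0]
      rcases eq_or_ne t 1 with h1 | h1
      · subst h1
        have : (2:ℕ) ≤ d + 1 := by omega
        simp [piState, step_c1 d hd, this]
      rcases le_or_gt (t+1) (d+1) with hle | hlt
      · have ht2 : 2 ≤ t := by omega
        have hk : 2 ≤ d + 2 - t := by omega
        have h1' : ¬ t = 1 := h1
        have h0' : ¬ t = 0 := by omega
        have h0'' : ¬ t + 1 = 0 := by omega
        have h1'' : ¬ t + 1 = 1 := by omega
        have hle' : t ≤ d + 1 := by omega
        simp only [piState, h0', h1', h0'', h1'', hle, hle', if_false, if_true, if_neg, if_pos]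
        rw [step_cmid d _ hk]
        first | rfl | (congr 1; omega)
      rcases eq_or_ne t (d+1) with heq | hne
      · have h0' : ¬ t = 0 := by omega
        have h1' : ¬ t = 1 := by omega
        have h0'' : ¬ t + 1 = 0 := by omega
        have h1'' : ¬ t + 1 = 1 := by omega
        have hgt : ¬ t + 1 ≤ d + 1 := by omega
        have hle' : t ≤ d + 1 := by omega
        have hk1 : d + 2 - t = 1 := by omega
        simp only [piState, h0', h1', h0'', h1'', hgt, hle', if_false, if_true, if_neg, if_pos,
          hk1]
        exact step_cmid1 d
      · have h0' : ¬ t = 0 := by omega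
        have h1' : ¬ t = 1 := by omega
        have h0'' : ¬ t + 1 = 0 := by omega
        have h1'' : ¬ t + 1 = 1 := by omega
        have hgt : ¬ t + 1 ≤ d + 1 := by omega
        have hgt' : ¬ t ≤ d + 1 := by omega
        simp only [piState, h0', h1', h0'', h1'', hgt, hgt', if_false, if_neg]
        exact step_cfin d


/-! ### Sinks and runtime of `Π` -/

lemma pi_sink_iff (d : ℕ) (i : Fin 4) :
    (splitParentPi d).isSink i ↔ i = 2 ∨ i = 3 := by
  constructor
  · rintro ⟨hout, hrule⟩
    fin_cases i <;> first
      | (left; rfl)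
      | (right; rfl)
      | (exfalso; simp [splitParentPi] at hrule)
  · rintro (rfl | rfl) <;>
      exact ⟨by intro j h; fin_cases j <;> simp [splitParentPi] at h <;> omega,
        by simp [splitParentPi]⟩

lemma pi_conf_sink2 (d : ℕ) (hd : 1 ≤ d) (t : ℕ) (ht : d + 2 ≤ t) :
    ((splitParentPi d).conf t).n 2 = 1 := by
  rw [pi_conf d hd t]
  have h0 : ¬ t = 0 := by omega
  have h1 : ¬ t = 1 := by omega
  have h2 : ¬ t ≤ d + 1 := by omega
  simp [piState, h0, h1, h2, cfin]

lemma pi_conf_sink3 (d : ℕ) (hd : 1 ≤ d) (t : ℕ) (ht : d + 2 ≤ t) :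
    ((splitParentPi d).conf t).n 3 = 1 := by
  rw [pi_conf d hd t]
  have h0 : ¬ t = 0 := by omega
  have h1 : ¬ t = 1 := by omega
  have h2 : ¬ t ≤ d + 1 := by omega
  simp [piState, h0, h1, h2, cfin]

lemma pi_conf_sink2_early (d : ℕ) (hd : 1 ≤ d) (t : ℕ) (ht : t < d + 2) :
    ((splitParentPi d).conf t).n 2 = 0 := by
  rw [pi_conf d hd t]
  unfold piState
  split
  · simp [c0]
  split
  · simp [c1]
  split
  · simp [cmid]
  · omega

lemma pi_runtime_set (d : ℕ) (hd : 1 ≤ d) :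
    {t | ∀ i, (splitParentPi d).isSink i → 1 ≤ ((splitParentPi d).conf t).n i}
      = Set.Ici (d + 2) := by
  ext t
  simp only [Set.mem_setOf_eq, Set.mem_Ici]
  constructor
  · intro h
    by_contra hlt
    have := h 2 ((pi_sink_iff d 2).2 (Or.inl rfl))
    rw [pi_conf_sink2_early d hd t (by omega)] at this
    omega
  · intro h i hi
    rcases (pi_sink_iff d i).1 hi with rfl | rfl
    · rw [pi_conf_sink2 d hd t h]
    · rw [pi_conf_sink3 d hd t h]

lemma pi_runtime (d : ℕ) (hd : 1 ≤ d) :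
    (splitParentPi d).totalRuntime = 1 + d := by
  unfold SNPSystem.totalRuntime
  rw [pi_runtime_set d hd, csInf_Ici]
  omega


/-! ### The delay-free system `Π̄` -/

def barRule (d : ℕ) : SNPRule :=
  ⟨{d+1}, d+1, 1, 0, by omega, by omega⟩

def splitBar (d : ℕ) : SNPSystem 4 where
  init := ![d+1, 0, 0, 0]
  rule := ![some plusRule, some (barRule d), none, none]
  syn := fun i j =>
    (i.val = 0 ∧ j.val = 1) ∨ (i.val = 1 ∧ j.val = 2) ∨ (i.val = 1 ∧ j.val = 3)
  syn_irrefl := by intro i h; omega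

def bmid (d k t : ℕ) : SNPConfig 4 := ⟨![k, t, 0, 0], ![0,0,0,0]⟩

lemma bar_init (d : ℕ) : (splitBar d).initConfig = bmid d (d+1) 0 := by
  unfold SNPSystem.initConfig
  congr 1 <;> funext i <;> fin_cases i <;> simp [splitBar, bmid]

lemma step_bmid (d k t : ℕ) (hk : 1 ≤ k) (ht : ¬ t = d + 1) :
    (splitBar d).step (bmid d k t) = bmid d (k-1) (t+1) := by
  unfold SNPSystem.step
  congr 1 <;> funext i <;> fin_cases i <;>
    simp [SNPSystem.consumed, SNPSystem.recv, SNPSystem.nextClk, SNPSystem.sent,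
      SNPSystem.emits, splitBar, bmid, plusRule, barRule, Fin.sum_univ_four, hk, ht] <;>
    decide

lemma step_bfire (d : ℕ) :
    (splitBar d).step (bmid d 0 (d+1)) = cfin := by
  unfold SNPSystem.step
  congr 1 <;> funext i <;> fin_cases i <;>
    simp [SNPSystem.consumed, SNPSystem.recv, SNPSystem.nextClk, SNPSystem.sent,
      SNPSystem.emits, splitBar, bmid, cfin, plusRule, barRule, Fin.sum_univ_four] <;>
    decide

lemma step_bar_cfin (d : ℕ) : (splitBar d).step cfin = cfin := by
  have h : ¬ (1:ℕ) = d + 1 ∨ True := Or.inr trivial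
  unfold SNPSystem.step
  congr 1 <;> funext i <;> fin_cases i <;>
    simp [SNPSystem.consumed, SNPSystem.recv, SNPSystem.nextClk, SNPSystem.sent,
      SNPSystem.emits, splitBar, cfin, plusRule, barRule, Fin.sum_univ_four] <;>
    decide

def barState (d t : ℕ) : SNPConfig 4 :=
  if t ≤ d + 1 then bmid d (d + 1 - t) t else cfin

lemma bar_conf (d t : ℕ) : (splitBar d).conf t = barState d t := by
  induction t with
  | zero => simp [SNPSystem.conf, barState, bar_init]
  | succ t ih =>
      have hstep : (splitBar d).conf (t+1) = (splitBar d).step ((splitBar d).conf t) := by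
        simp [SNPSystem.conf, Function.iterate_succ_apply']
      rw [hstep, ih]
      rcases lt_trichotomy t (d+1) with hlt | heq | hgt
      · have h1 : t ≤ d + 1 := by omega
        have h2 : t + 1 ≤ d + 1 := by omega
        have hk : 1 ≤ d + 1 - t := by omega
        have ht : ¬ t = d + 1 := by omega
        simp only [barState, h1, h2, if_pos]
        rw [step_bmid d _ _ hk ht]
        first | rfl | (congr 1; omega)
      · subst heq
        have h1 : d + 1 ≤ d + 1 := le_refl _
        have h2 : ¬ d + 1 + 1 ≤ d + 1 := by omega
        simp only [barState, h1, h2, if_pos, if_neg, if_false]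
        have : d + 1 - (d + 1) = 0 := by omega
        rw [this]
        exact step_bfire d
      · have h1 : ¬ t ≤ d + 1 := by omega
        have h2 : ¬ t + 1 ≤ d + 1 := by omega
        simp only [barState, h1, h2, if_neg]
        exact step_bar_cfin d


lemma bar_sink_iff (d : ℕ) (i : Fin 4) :
    (splitBar d).isSink i ↔ i = 2 ∨ i = 3 := by
  constructor
  · rintro ⟨hout, hrule⟩
    fin_cases i <;> first
      | (left; rfl)
      | (right; rfl)
      | (exfalso; simp [splitBar] at hrule)
  · rintro (rfl | rfl) <;>
      exact ⟨by intro j h; fin_cases j <;> simp [splitBar] at h <;> omega,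
        by simp [splitBar]⟩

lemma bar_source_iff (d : ℕ) (i : Fin 4) :
    (splitBar d).isSource i ↔ i = 0 := by
  constructor
  · intro h
    fin_cases i
    · rfl
    · exact absurd (h 0 (by simp only [splitBar]; decide)) not_false
    · exact absurd (h 1 (by simp only [splitBar]; decide)) not_false
    · exact absurd (h 1 (by simp only [splitBar]; decide)) not_false
  · rintro rfl
    intro j hj
    fin_cases j <;> simp [splitBar] at hj <;> omega

lemma bar_conf_sink2 (d t : ℕ) (ht : d + 2 ≤ t) :
    ((splitBar d).conf t).n 2 = 1 := by
  rw [bar_conf]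
  have h : ¬ t ≤ d + 1 := by omega
  simp [barState, h, cfin]

lemma bar_conf_sink3 (d t : ℕ) (ht : d + 2 ≤ t) :
    ((splitBar d).conf t).n 3 = 1 := by
  rw [bar_conf]
  have h : ¬ t ≤ d + 1 := by omega
  simp [barState, h, cfin]

lemma bar_conf_sink2_early (d t : ℕ) (ht : t < d + 2) :
    ((splitBar d).conf t).n 2 = 0 := by
  rw [bar_conf]
  have h : t ≤ d + 1 := by omega
  simp [barState, h, bmid]

lemma bar_runtime_set (d : ℕ) :
    {t | ∀ i, (splitBar d).isSink i → 1 ≤ ((splitBar d).conf t).n i}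
      = Set.Ici (d + 2) := by
  ext t
  simp only [Set.mem_setOf_eq, Set.mem_Ici]
  constructor
  · intro h
    by_contra hlt
    have := h 2 ((bar_sink_iff d 2).2 (Or.inl rfl))
    rw [bar_conf_sink2_early d t (by omega)] at this
    omega
  · intro h i hi
    rcases (bar_sink_iff d i).1 hi with rfl | rfl
    · rw [bar_conf_sink2 d t h]
    · rw [bar_conf_sink3 d t h]

lemma bar_runtime (d : ℕ) : (splitBar d).totalRuntime = 1 + d := by
  unfold SNPSystem.totalRuntime
  rw [bar_runtime_set d, csInf_Ici]
  omega

lemma bar_delayFree (d : ℕ) : (splitBar d).delayFree := by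
  intro i r hr
  fin_cases i <;> simp [splitBar, plusRule, barRule] at hr <;> simp [← hr, plusRule, barRule]


lemma bar_simulates (d : ℕ) (hd : 1 ≤ d) :
    (splitBar d).Simulates (splitParentPi d) := by
  refine ⟨bar_delayFree d, ⟨0, by rw [pi_runtime d hd, bar_runtime d]; omega⟩, ?_⟩
  intro j hj i hi
  left
  rw [bar_runtime d, pi_runtime d hd]
  have h1 : 1 + d + 1 = d + 2 := by omega
  rw [h1]
  rcases (bar_sink_iff d j).1 hj with rfl | rfl <;>
    rcases (pi_sink_iff d i).1 hi with rfl | rfl <;>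
    simp [bar_conf_sink2 d _ (le_refl _), bar_conf_sink3 d _ (le_refl _),
      pi_conf_sink2 d hd _ (le_refl _), pi_conf_sink3 d hd _ (le_refl _)]

end SNPProof

theorem split_parent_delay_simulation (d : ℕ) (hd : 1 ≤ d) :
    -- the total runtime of Π is 1 + d
    (splitParentPi d).totalRuntime = 1 + d ∧
    -- both sinks σ3 and σ4 end with exactly 1 spike each
    (∀ t, (splitParentPi d).totalRuntime + 1 ≤ t → ((splitParentPi d).conf t).n 2 = 1) ∧
    (∀ t, (splitParentPi d).totalRuntime + 1 ≤ t → ((splitParentPi d).conf t).n 3 = 1) ∧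
    -- there is a delay-free Π̄ with one source and two sinks, total runtime also 1 + d,
    -- whose two sinks end with exactly 1 spike each
    (∃ (m : ℕ) (T : SNPSystem m) (src s1 s2 : Fin m),
      T.delayFree ∧
      T.isSource src ∧ (∀ i, T.isSource i → i = src) ∧
      s1 ≠ s2 ∧ T.isSink s1 ∧ T.isSink s2 ∧ (∀ i, T.isSink i → i = s1 ∨ i = s2) ∧
      T.totalRuntime = 1 + d ∧
      (∀ t, T.totalRuntime + 1 ≤ t → (T.conf t).n s1 = 1) ∧
      (∀ t, T.totalRuntime + 1 ≤ t → (T.conf t).n s2 = 1) ∧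
      -- hence Π̄ simulates the split routing of Π with zero time offset
      T.Simulates (splitParentPi d) ∧
      T.totalRuntime = (splitParentPi d).totalRuntime) := by
  have hrt := SNPProof.pi_runtime d hd
  refine ⟨hrt, ?_, ?_, ?_⟩
  · intro t ht
    exact SNPProof.pi_conf_sink2 d hd t (by omega)
  · intro t ht
    exact SNPProof.pi_conf_sink3 d hd t (by omega)
  · refine ⟨4, SNPProof.splitBar d, 0, 2, 3, SNPProof.bar_delayFree d,
      (SNPProof.bar_source_iff d 0).2 rfl,
      fun i hi => (SNPProof.bar_source_iff d i).1 hi,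
      by decide,
      (SNPProof.bar_sink_iff d 2).2 (Or.inl rfl),
      (SNPProof.bar_sink_iff d 3).2 (Or.inr rfl),
      fun i hi => (SNPProof.bar_sink_iff d i).1 hi,
      SNPProof.bar_runtime d, ?_, ?_, SNPProof.bar_simulates d hd, ?_⟩
    · intro t ht
      rw [SNPProof.bar_runtime d] at ht
      exact SNPProof.bar_conf_sink2 d t (by omega)
    · intro t ht
      rw [SNPProof.bar_runtime d] at ht
      exact SNPProof.bar_conf_sink3 d t (by omega)
    · rw [SNPProof.bar_runtime d, hrt]
end
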